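/- Fix an integer r ≥ 2 and a real constant c' with 0 < c' < 1/44. Let F be the family consisting of all (j+3,j)-configurations for 2 ≤ j ≤ r together with all (4,2)- and (6,2)-configurations, and for a positive integer v let ex(v,F) denote the largest integer n such that there exists a set of n 4-cycles on a v-element set containing no configuration isomorphic to a member of F. Then there exists a function h(v) = O(v) such that for all sufficiently large v, ex(v,F) ≥ (c'(1 − 44c')/16)·v² − h(v). In particular ex(v,F) grows quadratically in v. -/

import Mathlib

open Finset

/-- The edge set of the 4-cycle `(a, b, c, d)`: edges {a,b}, {b,c}, {c,d}, {d,a}. -/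
def cycEdges {V : Type*} [DecidableEq V] (a b c d : V) : Finset (Sym2 V) :=
  {s(a, b), s(b, c), s(c, d), s(d, a)}

/-- `E` is the edge set of a 4-cycle on four distinct vertices. -/
def IsFourCycle {V : Type*} [DecidableEq V] (E : Finset (Sym2 V)) : Prop :=
  ∃ a b c d : V, ([a, b, c, d] : List V).Nodup ∧ E = cycEdges a b c d

/-- The set of vertices covered by a set of edges. -/
def edgeVerts {V : Type*} [DecidableEq V] (E : Finset (Sym2 V)) : Finset V :=
  E.sup (Sym2.lift ⟨fun x y => ({x, y} : Finset V), fun x y => Finset.pair_comm x y⟩)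

/-- A `(k, l)`-configuration: a set of `l` pairwise edge-disjoint 4-cycles whose
union contains exactly `k` vertices. -/
def IsConfiguration {V : Type*} [DecidableEq V] (k l : ℕ)
    (D : Finset (Finset (Sym2 V))) : Prop :=
  D.card = l ∧ (∀ E ∈ D, IsFourCycle E) ∧
    (∀ E ∈ D, ∀ F ∈ D, E ≠ F → Disjoint E F) ∧
    (D.sup edgeVerts).card = k

/-- `C` is a 4-cycle system: a collection of 4-cycles whose edge sets partition
the edge set of the complete graph on `V`. -/
def IsFourCycleSystem {V : Type*} [DecidableEq V] (C : Finset (Finset (Sym2 V))) : Prop :=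
  (∀ E ∈ C, IsFourCycle E) ∧ ∀ e : Sym2 V, ¬ e.IsDiag → ∃! E, E ∈ C ∧ e ∈ E

/-- `C` is a 4-cycle packing: a set of pairwise edge-disjoint 4-cycles. -/
def IsFourCyclePacking {V : Type*} [DecidableEq V] (C : Finset (Finset (Sym2 V))) : Prop :=
  (∀ E ∈ C, IsFourCycle E) ∧ ∀ E ∈ C, ∀ F ∈ C, E ≠ F → Disjoint E F

/-- `C` is `r`-sparse: it contains no `(j+3, j)`-configuration for `2 ≤ j ≤ r`. -/
def RSparse {V : Type*} [DecidableEq V] (r : ℕ) (C : Finset (Finset (Sym2 V))) : Prop :=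
  ∀ j, 2 ≤ j → j ≤ r → ∀ D ⊆ C, ¬ IsConfiguration (j + 3) j D

/-- Two 4-cycles form a double-diamond: they are `(a,b,c,d)` and `(a,e,c,f)`,
sharing the diagonal {a,c}. -/
def IsDoubleDiamond {V : Type*} [DecidableEq V] (E F : Finset (Sym2 V)) : Prop :=
  ∃ a b c d e f : V, ([a, b, c, d, e, f] : List V).Nodup ∧
    E = cycEdges a b c d ∧ F = cycEdges a e c f

/-- `C` is D-avoiding: no two of its 4-cycles form a double-diamond. -/
def DAvoiding {V : Type*} [DecidableEq V] (C : Finset (Finset (Sym2 V))) : Prop :=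
  ∀ E ∈ C, ∀ F ∈ C, ¬ IsDoubleDiamond E F

/-- `C` is strictly `r`-sparse: `r`-sparse and D-avoiding. -/
def StrictlyRSparse {V : Type*} [DecidableEq V] (r : ℕ)
    (C : Finset (Finset (Sym2 V))) : Prop :=
  RSparse r C ∧ DAvoiding C

/-- A set of `l` (not necessarily edge-disjoint) 4-cycles on exactly `k` vertices. -/
def IsWeakConfiguration {V : Type*} [DecidableEq V] (k l : ℕ)
    (D : Finset (Finset (Sym2 V))) : Prop :=
  D.card = l ∧ (∀ E ∈ D, IsFourCycle E) ∧ (D.sup edgeVerts).card = k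

/-- `S` contains no configuration isomorphic to a member of the family `F` consisting
of all `(j+3, j)`-configurations for `2 ≤ j ≤ r` together with all `(4,2)`- and
`(6,2)`-configurations. -/
def FFree {V : Type*} [DecidableEq V] (r : ℕ) (S : Finset (Finset (Sym2 V))) : Prop :=
  ∀ D ⊆ S, ¬ IsWeakConfiguration 4 2 D ∧ ¬ IsWeakConfiguration 6 2 D ∧
    ∀ j, 2 ≤ j → j ≤ r → ¬ IsConfiguration (j + 3) j D

/-!
Alteration method. On each 4-set of the `v` points fix one 4-cycle, so that distinct cycles
have distinct vertex sets, and keep each of these `C(v,4)` cycles independently with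
probability `p = 3c'/(2v²)`; about `p·C(v,4) ≈ c'v²/16` survive. Every forbidden configuration
is a family of `2 ≤ j ≤ r` kept cycles spanning at most `max (j+3) 6` vertices, and deleting
one cycle from each surviving such family costs in expectation
`p²·105·(v⁶/720 + O(v⁵)) = 21c'²v²/64 + O(v)` for `j = 2` (a 6-set contains `105` pairs of
4-sets), and only `O(v^(j+3) p^j) = O(1)` for each `j ≥ 3`. Since `21/64 < 44/16` this leaves
`c'(1 - 44c')v²/16 - O(v)` cycles. The expectation is an explicit average over all subsets `S`
of the cycles with weights `p^|S| (1-p)^(C(v,4)-|S|)`.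
-/

section Alteration

variable {α : Type*} [DecidableEq α]

theorem sum_Icc_pow_mul_pow {R : Type*} [CommSemiring R] {D A : Finset α} (hDA : D ⊆ A)
    (p q : R) :
    ∑ S ∈ Icc D A, p ^ #S * q ^ (#A - #S) = p ^ #D * (p + q) ^ (#A - #D) := by
  rw [Icc_eq_image_powerset hDA, sum_image, ← card_sdiff_of_subset hDA,
    ← sum_pow_mul_eq_add_pow, mul_sum]
  · refine sum_congr rfl fun T hT => ?_
    have hdisj : Disjoint D T := (subset_sdiff.mp (mem_powerset.mp hT)).2.symm
    have hT : #T ≤ #A - #D := card_sdiff_of_subset hDA ▸ card_le_card (mem_powerset.mp hT)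
    rw [card_union_of_disjoint hdisj, card_sdiff_of_subset hDA, pow_add,
      show #A - (#D + #T) = #A - #D - #T by omega]
    ring
  · intro T hT U hU hTU
    have hT := (subset_sdiff.mp (mem_powerset.mp hT)).2
    have hU := (subset_sdiff.mp (mem_powerset.mp hU)).2
    simpa [union_sdiff_cancel_left hT.symm, union_sdiff_cancel_left hU.symm]
      using congrArg (· \ D) hTU

theorem sum_pow_mul_pow_mul_card_filter_subset {R : Type*} [CommSemiring R] (A : Finset α)
    (B : Finset (Finset α)) (hB : ∀ D ∈ B, D ⊆ A) (p q : R) :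
    ∑ S ∈ A.powerset, p ^ #S * q ^ (#A - #S) * #{D ∈ B | D ⊆ S} =
      ∑ D ∈ B, p ^ #D * (p + q) ^ (#A - #D) := by
  simp_rw [card_filter, Nat.cast_sum, mul_sum]
  rw [sum_comm]
  refine sum_congr rfl fun D hD => ?_
  simp only [Nat.cast_ite, Nat.cast_one, Nat.cast_zero, mul_ite, mul_one, mul_zero]
  rw [← sum_filter, ← Icc_eq_filter_powerset, sum_Icc_pow_mul_pow (hB D hD)]

theorem exists_card_le_forall_not_disjoint (B : Finset (Finset α))
    (hB : ∀ D ∈ B, D.Nonempty) : ∃ T : Finset α, #T ≤ #B ∧ ∀ D ∈ B, ¬ Disjoint D T := by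
  choose f hf using hB
  refine ⟨B.attach.image fun D => f D.1 D.2, card_image_le.trans (card_attach).le, ?_⟩
  intro D hD hdisj
  exact disjoint_left.mp hdisj (hf D hD) (mem_image.mpr ⟨⟨D, hD⟩, mem_attach _ _, rfl⟩)

theorem exists_subset_forall_not_subset_card_ge (A : Finset α) (B : Finset (Finset α))
    (hBA : ∀ D ∈ B, D ⊆ A) (hB : ∀ D ∈ B, D.Nonempty) {p : ℝ} (hp0 : 0 < p) (hp1 : p < 1) :
    ∃ S ⊆ A, (∀ D ∈ B, ¬ D ⊆ S) ∧ p * #A - ∑ D ∈ B, p ^ #D ≤ #S := by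
  set w : Finset α → ℝ := fun S => p ^ #S * (1 - p) ^ (#A - #S)
  have hw : ∀ S, 0 < w S := fun S => by have := sub_pos.mpr hp1; positivity
  have hsingle : ∀ S ∈ A.powerset, #{D ∈ A.powersetCard 1 | D ⊆ S} = #S := by
    intro S hS
    rw [← Nat.choose_one_right #S, ← card_powersetCard]
    congr 1
    ext D
    simp only [mem_filter, mem_powersetCard]
    exact ⟨fun h => ⟨h.2, h.1.2⟩, fun h => ⟨⟨h.1.trans (mem_powerset.mp hS), h.2⟩, h.1⟩⟩
  have hmean : ∑ S ∈ A.powerset, w S * (p * #A - ∑ D ∈ B, p ^ #D) =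
      ∑ S ∈ A.powerset, w S * ((#S : ℝ) - #{D ∈ B | D ⊆ S}) := by
    have h1 := sum_pow_mul_pow_mul_card_filter_subset A B hBA p (1 - p)
    have h2 := sum_pow_mul_pow_mul_card_filter_subset A (A.powersetCard 1)
      (fun D hD => (mem_powersetCard.mp hD).1) p (1 - p)
    have h3 := sum_pow_mul_eq_add_pow p (1 - p) A
    simp only [add_sub_cancel, one_pow, mul_one] at h1 h2 h3
    rw [sum_congr rfl fun S hS => by rw [hsingle S hS]] at h2
    have hsize : ∑ D ∈ A.powersetCard 1, p ^ #D = p * #A := by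
      rw [sum_congr rfl fun D hD => by rw [(mem_powersetCard.mp hD).2, pow_one], sum_const,
        card_powersetCard, Nat.choose_one_right, nsmul_eq_mul, mul_comm]
    simp only [mul_sub, sum_sub_distrib, ← sum_mul, w, h1, h2, h3, hsize, one_mul]
  obtain ⟨S, hS, hle⟩ := exists_le_of_sum_le ⟨∅, empty_mem_powerset A⟩ hmean.le
  obtain ⟨T, hT, hhit⟩ := exists_card_le_forall_not_disjoint {D ∈ B | D ⊆ S}
    fun D hD => hB D (mem_filter.mp hD).1
  refine ⟨S \ T, sdiff_subset.trans (mem_powerset.mp hS), ?_, ?_⟩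
  · intro D hD hDST
    exact hhit D (mem_filter.mpr ⟨hD, hDST.trans sdiff_subset⟩)
      (subset_sdiff.mp hDST).2
  · have hST : (#S : ℝ) ≤ #(S \ T) + #T := by exact_mod_cast card_le_card_sdiff_add_card
    have hT' : (#T : ℝ) ≤ #{D ∈ B | D ⊆ S} := by exact_mod_cast hT
    linarith [le_of_mul_le_mul_left hle (hw S)]

end Alteration

section QuadCycles

theorem edgeVerts_cycEdges {V : Type*} [DecidableEq V] (a b c d : V) :
    edgeVerts (cycEdges a b c d) = {a, b, c, d} := by
  ext x
  simp only [edgeVerts, cycEdges, sup_insert, sup_singleton, Sym2.lift_mk, mem_insert,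
    mem_singleton, sup_eq_union, mem_union]
  tauto

variable {V : Type*} [LinearOrder V]

def cycEdgesOfList : List V → Finset (Sym2 V)
  | [a, b, c, d] => cycEdges a b c d
  | _ => ∅

def sortedCycEdges (A : Finset V) : Finset (Sym2 V) :=
  cycEdgesOfList (A.sort (· ≤ ·))

theorem exists_sortedCycEdges_eq {A : Finset V} (hA : #A = 4) :
    ∃ a b c d : V, ([a, b, c, d] : List V).Nodup ∧ ({a, b, c, d} : Finset V) = A ∧
      sortedCycEdges A = cycEdges a b c d := by
  obtain ⟨a, b, c, d, hl⟩ := List.length_eq_four.mp ((length_sort (· ≤ ·)).trans hA)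
  refine ⟨a, b, c, d, hl ▸ A.sort_nodup (· ≤ ·), ?_, by rw [sortedCycEdges, hl]; rfl⟩
  ext x
  rw [← mem_sort (· ≤ ·) (s := A), hl]
  simp

theorem isFourCycle_sortedCycEdges {A : Finset V} (hA : #A = 4) :
    IsFourCycle (sortedCycEdges A) :=
  let ⟨a, b, c, d, hnd, _, h⟩ := exists_sortedCycEdges_eq hA
  ⟨a, b, c, d, hnd, h⟩

theorem edgeVerts_sortedCycEdges {A : Finset V} (hA : #A = 4) :
    edgeVerts (sortedCycEdges A) = A := by
  obtain ⟨a, b, c, d, -, hA, h⟩ := exists_sortedCycEdges_eq hA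
  rw [h, edgeVerts_cycEdges, hA]

variable (V) [Fintype V]

def quadCycles : Finset (Finset (Sym2 V)) :=
  (univ.powersetCard 4).image sortedCycEdges

variable {V}

theorem mem_quadCycles {E : Finset (Sym2 V)} :
    E ∈ quadCycles V ↔ ∃ A : Finset V, #A = 4 ∧ sortedCycEdges A = E := by
  simp [quadCycles, mem_powersetCard]

theorem IsFourCycle.of_mem_quadCycles {E : Finset (Sym2 V)} (hE : E ∈ quadCycles V) :
    IsFourCycle E := by
  obtain ⟨A, hA, rfl⟩ := mem_quadCycles.mp hE
  exact isFourCycle_sortedCycEdges hA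

theorem card_edgeVerts_of_mem_quadCycles {E : Finset (Sym2 V)} (hE : E ∈ quadCycles V) :
    #(edgeVerts E) = 4 := by
  obtain ⟨A, hA, rfl⟩ := mem_quadCycles.mp hE
  rw [edgeVerts_sortedCycEdges hA, hA]

theorem injOn_edgeVerts_quadCycles :
    Set.InjOn edgeVerts (quadCycles V : Set (Finset (Sym2 V))) := by
  intro E hE F hF hEF
  obtain ⟨A, hA, rfl⟩ := mem_quadCycles.mp hE
  obtain ⟨B, hB, rfl⟩ := mem_quadCycles.mp hF
  rw [edgeVerts_sortedCycEdges hA, edgeVerts_sortedCycEdges hB] at hEF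
  rw [hEF]

theorem card_quadCycles : #(quadCycles V) = (Fintype.card V).choose 4 := by
  rw [quadCycles, card_image_of_injOn, card_powersetCard, card_univ]
  intro A hA B hB hAB
  rw [← edgeVerts_sortedCycEdges (mem_powersetCard.mp hA).2,
    ← edgeVerts_sortedCycEdges (mem_powersetCard.mp hB).2, hAB]

end QuadCycles

section Counting

theorem card_small_finsets_le {V : Type*} [DecidableEq V] [Fintype V] (k : ℕ)
    (hV : 1 ≤ Fintype.card V) :
    #({U | #U ≤ k} : Finset (Finset V)) ≤
      (Fintype.card V).choose k + k * Fintype.card V ^ (k - 1) := by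
  have hsub : ({U | #U ≤ k} : Finset (Finset V)) ⊆
      (range (k + 1)).biUnion fun i => univ.powersetCard i := by
    intro U hU
    simp only [mem_filter, mem_univ, true_and] at hU
    simpa [mem_powersetCard, Nat.lt_succ_iff] using hU
  refine (card_le_card hsub).trans (card_biUnion_le.trans ?_)
  simp only [card_powersetCard, card_univ]
  rw [sum_range_succ, add_comm]
  gcongr
  calc ∑ i ∈ range k, (Fintype.card V).choose i
      ≤ ∑ _i ∈ range k, Fintype.card V ^ (k - 1) := by
        refine sum_le_sum fun i hi => (Nat.choose_le_pow _ i).trans ?_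
        exact Nat.pow_le_pow_right hV (by have := mem_range.mp hi; omega)
    _ = k * Fintype.card V ^ (k - 1) := by rw [sum_const, card_range, smul_eq_mul]

variable {V : Type*} [LinearOrder V] [Fintype V]

variable (V) in
def smallSpan (j k : ℕ) : Finset (Finset (Finset (Sym2 V))) :=
  {D ∈ (quadCycles V).powerset | #D = j ∧ #(D.sup edgeVerts) ≤ k}

theorem card_smallSpan_le (j k : ℕ) :
    #(smallSpan V j k) ≤ (k.choose 4).choose j * #({U | #U ≤ k} : Finset (Finset V)) := by
  refine card_le_mul_card_image_of_maps_to (f := fun D => D.sup edgeVerts)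
    (fun D hD => by simpa [smallSpan] using (mem_filter.mp hD).2.2) _ fun U hU => ?_
  have hUk : #U ≤ k := by simpa using hU
  have hmaps : ∀ D ∈ {D ∈ smallSpan V j k | D.sup edgeVerts = U},
      D.image edgeVerts ∈ (U.powersetCard 4).powersetCard j := by
    intro D hD
    simp only [smallSpan, mem_filter, mem_powerset] at hD
    obtain ⟨⟨hDQ, hDj, -⟩, hDU⟩ := hD
    refine mem_powersetCard.mpr ⟨fun A hA => ?_, ?_⟩
    · obtain ⟨E, hE, rfl⟩ := mem_image.mp hA
      exact mem_powersetCard.mpr ⟨hDU ▸ le_sup hE, card_edgeVerts_of_mem_quadCycles (hDQ hE)⟩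
    · rw [card_image_of_injOn (injOn_edgeVerts_quadCycles.mono hDQ), hDj]
  refine (card_le_card_of_injOn _ hmaps
    ((image_injOn_powerset_of_injOn injOn_edgeVerts_quadCycles).mono fun D hD => ?_)).trans ?_
  · exact (mem_filter.mp (mem_filter.mp (mem_coe.mp hD)).1).1
  · rw [card_powersetCard, card_powersetCard]
    exact Nat.choose_le_choose j (Nat.choose_le_choose 4 hUk)

end Counting

theorem fFree_of_forall_lt_card_sup {V : Type*} [DecidableEq V] {r : ℕ}
    {S : Finset (Finset (Sym2 V))} (hr : 2 ≤ r)
    (hS : ∀ D ⊆ S, 2 ≤ #D → #D ≤ r → max (#D + 3) 6 < #(D.sup edgeVerts)) : FFree r S := by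
  intro D hD
  refine ⟨fun ⟨h2, _, h4⟩ => ?_, fun ⟨h2, _, h6⟩ => ?_, fun j hj hjr ⟨hDj, _, _, hspan⟩ => ?_⟩
  all_goals have := hS D hD (by omega) (by omega); omega

theorem exists_fFree_subset_quadCycles (V : Type*) [LinearOrder V] [Fintype V] {r : ℕ}
    (hr : 2 ≤ r) {p : ℝ} (hp0 : 0 < p) (hp1 : p < 1) :
    ∃ S ⊆ quadCycles V, FFree r S ∧
      p * #(quadCycles V) - ∑ j ∈ Icc 2 r, #(smallSpan V j (max (j + 3) 6)) * p ^ j ≤ #S := by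
  set bad := (Icc 2 r).biUnion fun j => smallSpan V j (max (j + 3) 6)
  have hmem : ∀ {D}, D ∈ bad ↔ D ⊆ quadCycles V ∧ (2 ≤ #D ∧ #D ≤ r) ∧
      #(D.sup edgeVerts) ≤ max (#D + 3) 6 := by
    intro D
    simp only [bad, smallSpan, mem_biUnion, mem_filter, mem_Icc, mem_powerset]
    constructor
    · rintro ⟨j, hj, hDQ, rfl, hspan⟩
      exact ⟨hDQ, hj, hspan⟩
    · rintro ⟨hDQ, hj, hspan⟩
      exact ⟨#D, hj, hDQ, rfl, hspan⟩
  obtain ⟨S, hSQ, havoid, hS⟩ := exists_subset_forall_not_subset_card_ge (quadCycles V) bad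
    (fun D hD => (hmem.mp hD).1)
    (fun D hD => card_pos.mp (by have := (hmem.mp hD).2.1.1; omega)) hp0 hp1
  refine ⟨S, hSQ, fFree_of_forall_lt_card_sup hr fun D hDS h2 hDr => ?_, ?_⟩
  · by_contra! hspan
    exact havoid D (hmem.mpr ⟨hDS.trans hSQ, ⟨h2, hDr⟩, hspan⟩) hDS
  · have hBad : ∑ D ∈ bad, p ^ #D =
        ∑ j ∈ Icc 2 r, #(smallSpan V j (max (j + 3) 6)) * p ^ j := by
      rw [sum_biUnion]
      · refine sum_congr rfl fun j _ => ?_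
        rw [sum_congr rfl fun D hD => by rw [(mem_filter.mp hD).2.1], sum_const, nsmul_eq_mul]
      · intro i _ j _ hij
        exact disjoint_left.mpr fun D hi hj =>
          hij ((mem_filter.mp hi).2.1.symm.trans (mem_filter.mp hj).2.1)
    rwa [hBad] at hS

section Estimates

theorem sub_le_mul_choose_four {c : ℝ} (hc : 0 ≤ c) {n : ℕ} (hn : 3 ≤ n) :
    c / 16 * n ^ 2 - c * n ≤ 3 * c / (2 * n ^ 2) * n.choose 4 := by
  have hchoose : ((n : ℝ) - 3) ^ 4 / 24 ≤ n.choose 4 := by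
    have h := Nat.pow_le_choose (α := ℝ) 4 n
    rwa [show n + 1 - 4 = n - 3 by omega, Nat.cast_sub (by omega),
      show ((Nat.factorial 4 : ℕ) : ℝ) = 24 by norm_num [Nat.factorial]] at h
  have hn' : (3 : ℝ) ≤ n := by exact_mod_cast hn
  calc c / 16 * n ^ 2 - c * n ≤ 3 * c / (2 * n ^ 2) * (((n : ℝ) - 3) ^ 4 / 24) := by
        rw [div_mul_div_comm, le_div_iff₀ (by positivity)]
        have : (0 : ℝ) ≤ 4 * n ^ 3 + 54 * n ^ 2 - 108 * n + 81 := by nlinarith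
        nlinarith [mul_nonneg (mul_nonneg hc (sq_nonneg (n : ℝ))) this]
    _ ≤ 3 * c / (2 * n ^ 2) * n.choose 4 := by gcongr

variable {V : Type*} [LinearOrder V] [Fintype V]

theorem card_smallSpan_two_mul_sq_le {c : ℝ} (hV : 1 ≤ Fintype.card V) :
    #(smallSpan V 2 6) * (3 * c / (2 * Fintype.card V ^ 2)) ^ 2 ≤
      21 / 64 * c ^ 2 * Fintype.card V ^ 2 + 2835 / 2 * c ^ 2 * Fintype.card V := by
  set n := Fintype.card V
  have hcard : (#(smallSpan V 2 6) : ℝ) ≤ 105 * ((n : ℝ) ^ 6 / 720 + 6 * n ^ 5) := by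
    have h := (card_smallSpan_le (V := V) 2 6).trans
      (Nat.mul_le_mul_left _ (card_small_finsets_le 6 hV))
    have h6 := Nat.choose_le_pow_div (α := ℝ) 6 n
    rw [show ((Nat.factorial 6 : ℕ) : ℝ) = 720 by norm_num [Nat.factorial]] at h6
    rw [show (Nat.choose 6 4).choose 2 = 105 by decide] at h
    have h' : (#(smallSpan V 2 6) : ℝ) ≤ 105 * ((n.choose 6 : ℕ) + 6 * (n : ℝ) ^ 5) := by
      exact_mod_cast h
    linarith
  have hn : (0 : ℝ) < n := by exact_mod_cast hV
  calc #(smallSpan V 2 6) * (3 * c / (2 * n ^ 2)) ^ 2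
      ≤ 105 * ((n : ℝ) ^ 6 / 720 + 6 * n ^ 5) * (3 * c / (2 * n ^ 2)) ^ 2 := by gcongr
    _ = 21 / 64 * c ^ 2 * n ^ 2 + 2835 / 2 * c ^ 2 * n := by field_simp; ring

theorem card_smallSpan_mul_pow_le {j : ℕ} (hj : 3 ≤ j) (hV : 1 ≤ Fintype.card V) {p : ℝ}
    (hp0 : 0 ≤ p) (hp : p ≤ 1 / Fintype.card V ^ 2) :
    #(smallSpan V j (j + 3)) * p ^ j ≤ ((j + 3).choose 4).choose j * (j + 4) := by
  set n := Fintype.card V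
  have hn : (1 : ℝ) ≤ n := by exact_mod_cast hV
  have hcard :
      #(smallSpan V j (j + 3)) ≤ ((j + 3).choose 4).choose j * ((j + 4) * n ^ (j + 3)) := by
    refine (card_smallSpan_le j (j + 3)).trans (Nat.mul_le_mul_left _ ?_)
    refine (card_small_finsets_le (j + 3) hV).trans ?_
    have h1 := Nat.choose_le_pow n (j + 3)
    have h2 : n ^ (j + 3 - 1) ≤ n ^ (j + 3) := Nat.pow_le_pow_right hV (by omega)
    nlinarith
  have hpow : p ^ j * n ^ (j + 3) ≤ 1 := by
    calc p ^ j * n ^ (j + 3) ≤ (1 / (n : ℝ) ^ 2) ^ j * n ^ (2 * j) := by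
          gcongr
          omega
      _ = 1 := by rw [div_pow, one_pow, ← pow_mul, one_div_mul_cancel (by positivity)]
  calc (#(smallSpan V j (j + 3)) : ℝ) * p ^ j
      ≤ ((j + 3).choose 4).choose j * ((j + 4) * n ^ (j + 3)) * p ^ j := by
        gcongr; exact_mod_cast hcard
    _ = ((j + 3).choose 4).choose j * (j + 4) * (p ^ j * n ^ (j + 3)) := by ring
    _ ≤ ((j + 3).choose 4).choose j * (j + 4) := mul_le_of_le_one_right (by positivity) hpow

theorem sum_card_smallSpan_mul_pow_le {r : ℕ} (hr : 2 ≤ r) {c : ℝ} (hc0 : 0 < c)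
    (hc1 : c ≤ 2 / 3) (hV : 1 ≤ Fintype.card V) :
    ∑ j ∈ Icc 2 r, #(smallSpan V j (max (j + 3) 6)) * (3 * c / (2 * Fintype.card V ^ 2)) ^ j ≤
      21 / 64 * c ^ 2 * Fintype.card V ^ 2 + 2835 / 2 * c ^ 2 * Fintype.card V +
        ∑ j ∈ Icc 3 r, (((j + 3).choose 4).choose j * (j + 4) : ℝ) := by
  have hp : 3 * c / (2 * Fintype.card V ^ 2) ≤ 1 / Fintype.card V ^ 2 := by
    rw [div_le_div_iff₀ (by positivity) (by positivity)]
    nlinarith [sq_nonneg (Fintype.card V : ℝ)]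
  rw [← insert_Icc_add_one_left_eq_Icc hr, sum_insert (by simp)]
  refine add_le_add (card_smallSpan_two_mul_sq_le hV) (sum_le_sum fun j hj => ?_)
  have hj3 := (mem_Icc.mp hj).1
  rw [max_eq_left (by omega)]
  exact card_smallSpan_mul_pow_le hj3 hV (by positivity) hp

end Estimates

/-- For fixed `r ≥ 2` and `0 < c' < 1/44` there is a function `h(v) = O(v)` such that
for all sufficiently large `v` there is an `F`-free set of 4-cycles on `v` vertices of
size at least `c'(1 - 44c')/16 · v² - h(v)`; that is,
`ex(v, F) ≥ c'(1 - 44c')/16 · v² - h(v)`. -/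
theorem ex_F_free_lower_bound (r : ℕ) (hr : 2 ≤ r) (c' : ℝ)
    (hc0 : 0 < c') (hc1 : c' < 1 / 44) :
    ∃ (h : ℕ → ℝ) (K : ℝ), (∀ v : ℕ, |h v| ≤ K * v) ∧
      ∃ v₀ : ℕ, ∀ v : ℕ, v₀ ≤ v →
        ∃ S : Finset (Finset (Sym2 (Fin v))),
          (∀ E ∈ S, IsFourCycle E) ∧ FFree r S ∧
            c' * (1 - 44 * c') / 16 * (v : ℝ) ^ 2 - h v ≤ (S.card : ℝ) := by
  set Kr := ∑ j ∈ Icc 3 r, (((j + 3).choose 4).choose j * (j + 4) : ℝ)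
  have hKr : 0 ≤ Kr := sum_nonneg fun j _ => by positivity
  set K := c' + 1418 * c' ^ 2 + Kr
  refine ⟨fun v => K * v, K, fun v => by rw [abs_of_nonneg (by positivity)], 3, fun v hv => ?_⟩
  have hv1 : (1 : ℝ) ≤ v := by exact_mod_cast (by omega : 1 ≤ v)
  have hp1 : 3 * c' / (2 * (v : ℝ) ^ 2) < 1 := by
    rw [div_lt_one (by positivity)]
    nlinarith
  obtain ⟨S, hSQ, hF, hS⟩ := exists_fFree_subset_quadCycles (Fin v) hr (by positivity) hp1
  refine ⟨S, fun E hE => IsFourCycle.of_mem_quadCycles (hSQ hE), hF, ?_⟩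
  have hsum := sum_card_smallSpan_mul_pow_le (V := Fin v) hr hc0 (by linarith) (by rw [Fintype.card_fin]; omega)
  have hmain := sub_le_mul_choose_four hc0.le hv
  simp only [card_quadCycles, Fintype.card_fin] at hS hsum
  nlinarith [mul_nonneg (mul_nonneg hc0.le hc0.le) (sq_nonneg (v : ℝ)),
    mul_nonneg (mul_nonneg hc0.le hc0.le) (by linarith : (0 : ℝ) ≤ v),
    mul_nonneg hKr (sub_nonneg.mpr hv1)]
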